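/- arXiv:0710.0004 — 4 statements merged into one kernel-verified Lean document; each statement's English description precedes it below -/
import Mathlib

section
/- Let V(e) = Σ_{i=1}^n |e_i| be the ℓ1-norm on ℝ^n and let e : [0,∞) → ℝ^n be an absolutely continuous function such that for almost every t ≥ 0 with e(t) ≠ 0, the derivative of t ↦ V(e(t)) satisfies d/dt V(e(t)) ≤ μ for some constant μ < 0. Then e(t) = 0 for every t ≥ -V(e(0))/μ. -/
/-!
`V = ∑ i, |e i|` is `V 0` plus a primitive of the locally integrable `g`, hence continuous, so its
zero set in `[0, t]` is compact. Let `a` be the last zero of `V` in `[0, t]`, or `a = 0` if there is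
none. On `(a, t]` the function `V` does not vanish, so `g ≤ μ` a.e. there and
`V t ≤ V a + μ (t - a)`; this is `≤ 0` when `V a = 0`, and also when `a = 0` because `t ≥ -V 0 / μ`.
-/
open MeasureTheory Set

theorem intervalIntegral.integral_le_mul_sub_of_ae_le {g : ℝ → ℝ} {a b μ : ℝ} (hab : a ≤ b)
    (hg : IntervalIntegrable g volume a b) (h : ∀ᵐ s, s ∈ Ioc a b → g s ≤ μ) :
    ∫ s in a..b, g s ≤ μ * (b - a) := by
  calc ∫ s in a..b, g s ≤ ∫ _ in a..b, μ := by
        rw [intervalIntegral.integral_of_le hab, intervalIntegral.integral_of_le hab]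
        exact setIntegral_mono_ae_restrict hg.1 (integrableOn_const measure_Ioc_lt_top.ne)
          ((ae_restrict_iff' measurableSet_Ioc).2 h)
    _ = μ * (b - a) := by rw [intervalIntegral.integral_const, smul_eq_mul, mul_comm]

theorem EuclideanSpace.sum_abs_eq_zero_iff {ι : Type*} [Fintype ι] (x : EuclideanSpace ℝ ι) :
    ∑ i, |x i| = 0 ↔ x = 0 := by
  simp [Finset.sum_eq_zero_iff_of_nonneg, PiLp.ext_iff]

section

variable {V g : ℝ → ℝ} {μ : ℝ}

theorem eq_add_integral_of_le (hint : ∀ t, 0 ≤ t → V t = V 0 + ∫ s in (0 : ℝ)..t, g s)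
    (hloc : ∀ t, 0 ≤ t → IntervalIntegrable g volume 0 t) {a b : ℝ} (ha : 0 ≤ a) (hab : a ≤ b) :
    V b = V a + ∫ s in a..b, g s := by
  rw [hint b (ha.trans hab), hint a ha, ← intervalIntegral.integral_interval_sub_left
    (hloc b (ha.trans hab)) (hloc a ha)]
  ring

theorem continuousOn_Icc_of_eq_add_integral
    (hint : ∀ t, 0 ≤ t → V t = V 0 + ∫ s in (0 : ℝ)..t, g s)
    (hloc : ∀ t, 0 ≤ t → IntervalIntegrable g volume 0 t) {t : ℝ} (ht : 0 ≤ t) :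
    ContinuousOn V (Icc 0 t) := by
  have hprim := intervalIntegral.continuousOn_primitive_interval' (hloc t ht) left_mem_uIcc
  rw [uIcc_of_le ht] at hprim
  exact (continuousOn_const.add hprim).congr fun s hs => hint s hs.1

theorem le_add_mul_sub_of_forall_ne_zero (hint : ∀ t, 0 ≤ t → V t = V 0 + ∫ s in (0 : ℝ)..t, g s)
    (hloc : ∀ t, 0 ≤ t → IntervalIntegrable g volume 0 t)
    (hg : ∀ᵐ s, 0 ≤ s → V s ≠ 0 → g s ≤ μ) {a b : ℝ} (ha : 0 ≤ a) (hab : a ≤ b)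
    (hne : ∀ s ∈ Ioc a b, V s ≠ 0) :
    V b ≤ V a + μ * (b - a) := by
  have hgab : ∫ s in a..b, g s ≤ μ * (b - a) := by
    refine intervalIntegral.integral_le_mul_sub_of_ae_le hab
      ((hloc a ha).symm.trans (hloc b (ha.trans hab))) ?_
    filter_upwards [hg] with s hs hsab using hs (ha.trans hsab.1.le) (hne s hsab)
  rw [eq_add_integral_of_le hint hloc ha hab]
  linarith

theorem eq_zero_after_settling_time (hint : ∀ t, 0 ≤ t → V t = V 0 + ∫ s in (0 : ℝ)..t, g s)
    (hloc : ∀ t, 0 ≤ t → IntervalIntegrable g volume 0 t) (hμ : μ < 0) (hV : ∀ s, 0 ≤ V s)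
    (hg : ∀ᵐ s, 0 ≤ s → V s ≠ 0 → g s ≤ μ) {t : ℝ} (ht : -V 0 / μ ≤ t) : V t = 0 := by
  have ht0 : 0 ≤ t := (div_nonneg_of_nonpos (neg_nonpos.2 (hV 0)) hμ.le).trans ht
  refine le_antisymm ?_ (hV t)
  set Z := Icc 0 t ∩ V ⁻¹' {0}
  have hZ : IsCompact Z := isCompact_Icc.of_isClosed_subset
    ((continuousOn_Icc_of_eq_add_integral hint hloc ht0).preimage_isClosed_of_isClosed
      isClosed_Icc isClosed_singleton) inter_subset_left
  rcases Z.eq_empty_or_nonempty with hZ_empty | hZ_ne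
  · have hdecay := le_add_mul_sub_of_forall_ne_zero hint hloc hg le_rfl ht0
      fun s hs hVs => hZ_empty.subset ⟨⟨hs.1.le, hs.2⟩, hVs⟩
    have := (div_le_iff_of_neg hμ).1 ht
    linarith
  · obtain ⟨a, ⟨⟨ha0, hat⟩, hVa⟩, hlast⟩ := hZ.exists_isGreatest hZ_ne
    have hdecay := le_add_mul_sub_of_forall_ne_zero hint hloc hg ha0 hat
      fun s hs hVs => (hlast ⟨⟨ha0.trans hs.1.le, hs.2⟩, hVs⟩).not_gt hs.1
    have : μ * (t - a) ≤ 0 := mul_nonpos_of_nonpos_of_nonneg hμ.le (sub_nonneg.2 hat)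
    rw [mem_preimage, mem_singleton_iff] at hVa
    linarith

end

/-- finite-time convergence for the ℓ1 Lyapunov function along an
absolutely continuous error trajectory.  Absolute continuity of `t ↦ V(e(t))` is
encoded by the integral (FTC) representation with density `g`. -/
theorem stmt0 (n : ℕ) (e : ℝ → EuclideanSpace ℝ (Fin n)) (μ : ℝ) (hμ : μ < 0)
    (g : ℝ → ℝ)
    (hint : ∀ t : ℝ, 0 ≤ t →
      (∑ i, |e t i|) = (∑ i, |e 0 i|) + ∫ s in (0:ℝ)..t, g s)
    (hloc : ∀ t : ℝ, 0 ≤ t → IntervalIntegrable g MeasureTheory.volume 0 t)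
    (hg : ∀ᵐ s : ℝ, 0 ≤ s → e s ≠ 0 → g s ≤ μ) :
    ∀ t : ℝ, -(∑ i, |e 0 i|) / μ ≤ t → e t = 0 := by
  intro t ht
  rw [← EuclideanSpace.sum_abs_eq_zero_iff]
  refine eq_zero_after_settling_time (V := fun s => ∑ i, |e s i|) hint hloc hμ
    (fun s => Finset.sum_nonneg fun i _ => abs_nonneg _) ?_ ht
  filter_upwards [hg] with s hs h0 hV
  exact hs h0 fun he => hV ((EuclideanSpace.sum_abs_eq_zero_iff _).2 he)
end

section
/- Suppose x : [0,∞) → ℝ^n is absolutely continuous, y₀ : [0,∞) → ℝ^n is absolutely continuous, and for almost every t ≥ 0 and every i, x_i'(t) = φ_i(t) + b_i sgn(x_i(t) - y_{0,i}(t)) whenever x_i(t) ≠ y_{0,i}(t), where |φ_i(t) - y_{0,i}'(t)| ≤ M and b_i < -M. Then x(t) = y₀(t) for all t ≥ t₀ where t₀ = Σ_i |x_i(0) - y_{0,i}(0)| / (-μ) and μ = max_i (M + b_i) < 0. -/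
/-!
Each error component `eᵢ = xᵢ - y₀ᵢ` satisfies `sgn(eᵢ) eᵢ' ≤ M + bᵢ ≤ μ < 0` wherever `eᵢ ≠ 0`.
Hence `|eᵢ|` decreases with slope at most `μ` while it is positive, and once it vanishes it
cannot become positive again: on an interval `(u, v]` where `eᵢ > 0` following a point `u` with
`eᵢ u ≤ 0` we would get `eᵢ v ≤ eᵢ u + μ (v - u) ≤ 0`. So `eᵢ` vanishes from time
`|eᵢ(0)| / (-μ) ≤ t₀` on.
-/

open MeasureTheory Set intervalIntegral

section Comparison

variable {e g : ℝ → ℝ} {μ : ℝ}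

lemma continuousOn_Icc_of_eq_add_integral_s10
    (hg : ∀ t, 0 ≤ t → IntervalIntegrable g volume 0 t)
    (he : ∀ t, 0 ≤ t → e t = e 0 + ∫ s in (0:ℝ)..t, g s) {T : ℝ} (hT : 0 ≤ T) :
    ContinuousOn e (Icc 0 T) := by
  have hprim := continuousOn_primitive_interval' (a := 0) (hg T hT)
    (by rw [uIcc_of_le hT]; exact left_mem_Icc.2 hT)
  rw [uIcc_of_le hT] at hprim
  exact (continuousOn_const.add hprim).congr fun t ht => he t ht.1

lemma sub_le_mul_sub_of_pos_on_Ioc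
    (hg : ∀ t, 0 ≤ t → IntervalIntegrable g volume 0 t)
    (he : ∀ t, 0 ≤ t → e t = e 0 + ∫ s in (0:ℝ)..t, g s)
    (hslope : ∀ᵐ t, 0 ≤ t → 0 < e t → g t ≤ μ)
    {u v : ℝ} (hu : 0 ≤ u) (huv : u ≤ v) (hpos : ∀ s ∈ Ioc u v, 0 < e s) :
    e v - e u ≤ μ * (v - u) := by
  have hv : 0 ≤ v := hu.trans huv
  have hguv : IntervalIntegrable g volume u v := (hg u hu).symm.trans (hg v hv)
  have hle : g ≤ᵐ[volume.restrict (Icc u v)] fun _ => μ := by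
    rw [← Measure.restrict_congr_set Ioc_ae_eq_Icc]
    filter_upwards [ae_restrict_mem measurableSet_Ioc, ae_restrict_of_ae hslope] with s hs hgs
    exact hgs (hu.trans hs.1.le) (hpos s hs)
  calc e v - e u = ∫ s in u..v, g s := by
        rw [he v hv, he u hu, ← integral_interval_sub_left (hg v hv) (hg u hu)]
        ring
    _ ≤ ∫ _ in u..v, μ := integral_mono_ae_restrict huv hguv intervalIntegrable_const hle
    _ = μ * (v - u) := by rw [intervalIntegral.integral_const, smul_eq_mul, mul_comm]

lemma nonpos_of_add_mul_nonpos (hμ : μ < 0)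
    (hg : ∀ t, 0 ≤ t → IntervalIntegrable g volume 0 t)
    (he : ∀ t, 0 ≤ t → e t = e 0 + ∫ s in (0:ℝ)..t, g s)
    (hslope : ∀ᵐ t, 0 ≤ t → 0 < e t → g t ≤ μ)
    {t : ℝ} (ht : 0 ≤ t) (hinit : e 0 + μ * t ≤ 0) : e t ≤ 0 := by
  by_contra! het
  obtain ⟨u, hu, hlast⟩ : ∃ u, IsGreatest (insert 0 (Icc 0 t ∩ e ⁻¹' Iic 0)) u := by
    refine IsCompact.exists_isGreatest ?_ (insert_nonempty _ _)
    exact (isCompact_Icc.of_isClosed_subset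
      ((continuousOn_Icc_of_eq_add_integral_s10 hg he ht).preimage_isClosed_of_isClosed
        isClosed_Icc isClosed_Iic) inter_subset_left).insert 0
  have hu0 : 0 ≤ u := hlast (mem_insert 0 _)
  have hut : u ≤ t := by
    rcases hu with rfl | hu
    exacts [ht, hu.1.2]
  have hpos : ∀ s ∈ Ioc u t, 0 < e s := fun s hs => by
    by_contra! hes
    exact hs.1.not_ge (hlast (Or.inr ⟨⟨hu0.trans hs.1.le, hs.2⟩, hes⟩))
  have hdecr := sub_le_mul_sub_of_pos_on_Ioc hg he hslope hu0 hut hpos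
  rcases hu with rfl | ⟨-, heu⟩
  · linarith
  · nlinarith [show e u ≤ 0 from heu]

lemma eq_zero_of_abs_add_mul_nonpos (hμ : μ < 0)
    (hg : ∀ t, 0 ≤ t → IntervalIntegrable g volume 0 t)
    (he : ∀ t, 0 ≤ t → e t = e 0 + ∫ s in (0:ℝ)..t, g s)
    (hslope : ∀ᵐ t, 0 ≤ t → e t ≠ 0 → Real.sign (e t) * g t ≤ μ)
    {t : ℝ} (ht : 0 ≤ t) (hinit : |e 0| + μ * t ≤ 0) : e t = 0 := by
  refine le_antisymm ?_ (neg_nonpos.1 ?_)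
  · refine nonpos_of_add_mul_nonpos hμ hg he ?_ ht (by linarith [le_abs_self (e 0)])
    filter_upwards [hslope] with s hs hs0 hes
    simpa [Real.sign_of_pos hes] using hs hs0 hes.ne'
  · refine nonpos_of_add_mul_nonpos (e := fun s => -e s) (g := fun s => -g s) hμ
      (fun s hs => (hg s hs).neg) (fun s hs => ?_) ?_ ht (by linarith [neg_abs_le (e 0)])
    · rw [intervalIntegral.integral_neg, he s hs]
      ring
    · filter_upwards [hslope] with s hs hs0 hes
      have hes : e s < 0 := neg_pos.1 hes
      simpa [Real.sign_of_neg hes] using hs hs0 hes.ne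

end Comparison

lemma sign_mul_sub_le_of_eq_add_mul_sign {a c d φ b M : ℝ} (ha : a ≠ 0)
    (hc : c = φ + b * Real.sign a) (hφ : |φ - d| ≤ M) :
    Real.sign a * (c - d) ≤ M + b := by
  rw [abs_le] at hφ
  rcases Real.sign_apply_eq_of_ne_zero a ha with h | h <;>
    · rw [hc, h]
      linarith

theorem stmt10_general (n : ℕ) [NeZero n] (M : ℝ) (b : Fin n → ℝ)
    (hb : ∀ i : Fin n, b i < -M)
    (φ : Fin n → ℝ → ℝ)
    (x y₀ xd yd : ℝ → Fin n → ℝ)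
    (hxint : ∀ (i : Fin n) (t : ℝ), 0 ≤ t →
      IntervalIntegrable (fun s => xd s i) MeasureTheory.volume 0 t ∧
      x t i = x 0 i + ∫ s in (0:ℝ)..t, xd s i)
    (hyint : ∀ (i : Fin n) (t : ℝ), 0 ≤ t →
      IntervalIntegrable (fun s => yd s i) MeasureTheory.volume 0 t ∧
      y₀ t i = y₀ 0 i + ∫ s in (0:ℝ)..t, yd s i)
    (hode : ∀ᵐ t : ℝ, 0 ≤ t → ∀ i : Fin n, x t i ≠ y₀ t i →
      xd t i = φ i t + b i * Real.sign (x t i - y₀ t i))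
    (hbound : ∀ᵐ t : ℝ, 0 ≤ t → ∀ i : Fin n, |φ i t - yd t i| ≤ M)
    (μ : ℝ)
    (hμ : μ = Finset.univ.sup' Finset.univ_nonempty (fun i : Fin n => M + b i)) :
    ∀ t : ℝ, (∑ i, |x 0 i - y₀ 0 i|) / (-μ) ≤ t → x t = y₀ t := by
  intro t ht
  have hμneg : μ < 0 := hμ ▸ (Finset.sup'_lt_iff _).2 fun i _ => by linarith [hb i]
  have ht0 : 0 ≤ t := (div_nonneg (by positivity) (by linarith)).trans ht
  funext i
  have hμi : M + b i ≤ μ := hμ ▸ Finset.le_sup' (fun j => M + b j) (Finset.mem_univ i)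
  have hinit : |x 0 i - y₀ 0 i| + μ * t ≤ 0 := by
    have := Finset.single_le_sum (f := fun j => |x 0 j - y₀ 0 j|)
      (fun j _ => abs_nonneg _) (Finset.mem_univ i)
    rw [div_le_iff₀ (neg_pos.2 hμneg)] at ht
    linarith
  refine sub_eq_zero.1 <| eq_zero_of_abs_add_mul_nonpos (e := fun s => x s i - y₀ s i)
    (g := fun s => xd s i - yd s i) hμneg
    (fun u hu => (hxint i u hu).1.sub (hyint i u hu).1) (fun u hu => ?_) ?_ ht0 hinit
  · rw [(hxint i u hu).2, (hyint i u hu).2, integral_sub (hxint i u hu).1 (hyint i u hu).1]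
    ring
  · filter_upwards [hode, hbound] with s hs hbs hs0 hes
    exact (sign_mul_sub_le_of_eq_add_mul_sign hes (hs hs0 i (sub_ne_zero.1 hes))
      (hbs hs0 i)).trans hμi

/-- static discontinuous feedback synchronization.  The slave
trajectory x (absolutely continuous, encoded by the FTC representation with
density xd) satisfies, wherever the error component is nonzero,
xᵢ' = φᵢ(t) + bᵢ sgn(xᵢ - y₀ᵢ) with |φᵢ(t) - y₀ᵢ'(t)| ≤ M and bᵢ < -M.  Then x
coincides with y₀ after the finite time t₀ = Σᵢ|xᵢ(0) - y₀ᵢ(0)|/(-μ),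
μ = maxᵢ (M + bᵢ). -/
theorem stmt10 (n : ℕ) [NeZero n] (M : ℝ) (hM : 0 < M) (b : Fin n → ℝ)
    (hb : ∀ i : Fin n, b i < -M)
    (φ : Fin n → ℝ → ℝ) (hφ : ∀ i : Fin n, Measurable (φ i))
    (x y₀ xd yd : ℝ → Fin n → ℝ)
    (hxint : ∀ (i : Fin n) (t : ℝ), 0 ≤ t →
      IntervalIntegrable (fun s => xd s i) MeasureTheory.volume 0 t ∧
      x t i = x 0 i + ∫ s in (0:ℝ)..t, xd s i)
    (hyint : ∀ (i : Fin n) (t : ℝ), 0 ≤ t →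
      IntervalIntegrable (fun s => yd s i) MeasureTheory.volume 0 t ∧
      y₀ t i = y₀ 0 i + ∫ s in (0:ℝ)..t, yd s i)
    (hode : ∀ᵐ t : ℝ, 0 ≤ t → ∀ i : Fin n, x t i ≠ y₀ t i →
      xd t i = φ i t + b i * Real.sign (x t i - y₀ t i))
    (hbound : ∀ᵐ t : ℝ, 0 ≤ t → ∀ i : Fin n, |φ i t - yd t i| ≤ M)
    (μ : ℝ)
    (hμ : μ = Finset.univ.sup' Finset.univ_nonempty (fun i : Fin n => M + b i)) :
    ∀ t : ℝ, (∑ i, |x 0 i - y₀ 0 i|) / (-μ) ≤ t → x t = y₀ t :=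
  stmt10_general n M b hb φ x y₀ xd yd hxint hyint hode hbound μ hμ
end

section
/- Let μ < 0 and suppose e : [0,∞) → ℝ^n is absolutely continuous with e(t*) = 0 for some t* ≥ 0, and for a.e. t the ℓ1-norm V(e(t)) satisfies: V(e(·)) is locally Lipschitz and its derivative is ≤ μ < 0 at a.e. point where V(e(t)) > 0. Then e(t) = 0 for all t ≥ t* (once the error reaches zero it remains zero: the sliding-mode invariance property). -/
open MeasureTheory Set

/-- sliding-mode invariance.  If the ℓ1-norm V(e(t)) of an
absolutely continuous error (encoded by FTC with density g) has a.e. derivative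
≤ μ < 0 wherever it is positive, then once the error reaches 0 it remains 0:
e(t*) = 0 implies e(t) = 0 for all t ≥ t*. -/
theorem stmt15 (n : ℕ) (e : ℝ → EuclideanSpace ℝ (Fin n)) (μ : ℝ) (hμ : μ < 0)
    (g : ℝ → ℝ)
    (hint : ∀ t : ℝ, 0 ≤ t →
      (∑ i, |e t i|) = (∑ i, |e 0 i|) + ∫ s in (0:ℝ)..t, g s)
    (hloc : ∀ t : ℝ, 0 ≤ t → IntervalIntegrable g MeasureTheory.volume 0 t)
    (hg : ∀ᵐ s : ℝ, 0 ≤ s → 0 < (∑ i, |e s i|) → g s ≤ μ)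
    (tstar : ℝ) (htstar : 0 ≤ tstar) (hzero : e tstar = 0) :
    ∀ t : ℝ, tstar ≤ t → e t = 0 := by
  intro t1 ht1
  set V : ℝ → ℝ := fun t => ∑ i, |e t i| with hVdef
  have hVnn : ∀ t, 0 ≤ V t := fun t => Finset.sum_nonneg fun i _ => abs_nonneg _
  have hVstar : V tstar = 0 := by simp [hVdef, hzero]
  have h0t1 : (0 : ℝ) ≤ t1 := le_trans htstar ht1
  have hkey : V t1 = 0 := by
    by_contra hne
    have hposV : 0 < V t1 := lt_of_le_of_ne (hVnn t1) (Ne.symm hne)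
    -- continuity of V on [0, t1]
    have hcontI : ContinuousOn (fun t => ∫ s in (0:ℝ)..t, g s) (Icc 0 t1) := by
      have := intervalIntegral.continuousOn_primitive_interval'
        (hloc t1 h0t1) (left_mem_uIcc (a := (0:ℝ)) (b := t1))
      rwa [uIcc_of_le h0t1] at this
    have hcont : ContinuousOn V (Icc 0 t1) := by
      have : ContinuousOn (fun t => V 0 + ∫ s in (0:ℝ)..t, g s) (Icc 0 t1) :=
        continuousOn_const.add hcontI
      exact this.congr fun t ht => hint t ht.1
    -- the set where V vanishes in [tstar, t1]
    set S : Set ℝ := Icc tstar t1 ∩ V ⁻¹' {0} with hSdef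
    have hScl : IsClosed S := by
      have := (hcont.mono (Icc_subset_Icc htstar le_rfl)).preimage_isClosed_of_isClosed
        isClosed_Icc (isClosed_singleton (x := (0:ℝ)))
      exact this
    have hSne : S.Nonempty := ⟨tstar, ⟨le_rfl, ht1⟩, hVstar⟩
    have hSbdd : BddAbove S := ⟨t1, fun x hx => hx.1.2⟩
    set s := sSup S with hsdef
    have hsS : s ∈ S := hScl.csSup_mem hSne hSbdd
    have hsV : V s = 0 := hsS.2
    have hs0 : (0 : ℝ) ≤ s := le_trans htstar hsS.1.1
    have hst1 : s ≤ t1 := hsS.1.2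
    have hslt : s < t1 := by
      rcases lt_or_eq_of_le hst1 with h | h
      · exact h
      · exact absurd (h ▸ hsV) hne
    -- integrability pieces
    have hint0t1 : IntervalIntegrable g volume 0 t1 := hloc t1 h0t1
    have hint0s : IntervalIntegrable g volume 0 s := hloc s hs0
    have hintst1 : IntervalIntegrable g volume s t1 :=
      hint0t1.mono_set (by rw [uIcc_of_le h0t1, uIcc_of_le (le_of_lt hslt)]
                           exact Icc_subset_Icc hs0 le_rfl)
    -- V t1 = V s + ∫ s..t1 g
    have hsplit : V t1 = V s + ∫ u in s..t1, g u := by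
      have hadd := intervalIntegral.integral_add_adjacent_intervals hint0s hintst1
      simp only [hVdef]
      linarith [hint t1 h0t1, hint s hs0]
    -- a.e. bound on Icc s t1
    have hae : ∀ᵐ u ∂(volume.restrict (Icc s t1)), g u ≤ μ := by
      rw [ae_restrict_iff' measurableSet_Icc]
      have hne' : ∀ᵐ u : ℝ, u ≠ s := by
        rw [ae_iff]
        have : {u : ℝ | ¬u ≠ s} = {s} := by ext u; simp
        rw [this]
        exact Real.volume_singleton
      filter_upwards [hg, hne'] with u hu hus hmem
      have hu0 : 0 ≤ u := le_trans hs0 hmem.1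
      have huIoc : u ∈ Ioc s t1 := ⟨lt_of_le_of_ne hmem.1 (Ne.symm hus), hmem.2⟩
      have hVu : 0 < V u := by
        rcases lt_or_eq_of_le (hVnn u) with h | h
        · exact h
        · exfalso
          have huS : u ∈ S := ⟨⟨le_trans hsS.1.1 (le_of_lt huIoc.1), huIoc.2⟩, h.symm⟩
          exact absurd (le_csSup hSbdd huS) (not_le.mpr huIoc.1)
      exact hu hu0 hVu
    have hbound : (∫ u in s..t1, g u) ≤ (t1 - s) * μ := by
      have := intervalIntegral.integral_mono_ae_restrict (le_of_lt hslt) hintst1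
        (intervalIntegrable_const (c := μ)) hae
      simpa [intervalIntegral.integral_const, smul_eq_mul] using this
    have : V t1 ≤ (t1 - s) * μ := by rw [hsplit, hsV]; linarith
    have hneg : (t1 - s) * μ < 0 := mul_neg_of_pos_of_neg (by linarith) hμ
    linarith
  -- conclude e t1 = 0
  have hall := (Finset.sum_eq_zero_iff_of_nonneg (fun i _ => abs_nonneg (e t1 i))).mp hkey
  ext i
  exact abs_eq_zero.mp (hall i (Finset.mem_univ i))
end

section
/- Let f : ℝ^n → ℝ^n be C¹, x₀ a T-periodic solution of ẋ = f(x), and z* a T-periodic solution of ż = -(f'(x₀(t)))ᵀ z with ⟨z*(t), x₀'(t)⟩ = 1 for all t. For the perturbation γ_δ(t,x) = (|x - y₀(t)|² - m - δ) f(x), where m is a constant and y₀ is continuous and T-periodic, the Malkin bifurcation function F_δ(θ) = ∫_0^T ⟨z*(τ), γ_δ(τ - θ, x₀(τ))⟩ dτ equals ∫_0^T |x₀(τ) - y₀(τ - θ)|² dτ - T m - T δ, which after the substitution τ ↦ τ + θ equals ∫_0^T |x₀(τ + θ) - y₀(τ)|² dτ - T m - T δ. -/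
open Function intervalIntegral

theorem Function.Periodic.intervalIntegral_comp_sub_eq {E : Type*} [NormedAddCommGroup E]
    [NormedSpace ℝ E] {h : ℝ → E} {T : ℝ} (hh : Periodic h T) (t θ : ℝ) :
    ∫ τ in t..t + T, h (τ - θ) = ∫ τ in t..t + T, h τ := by
  rw [integral_comp_sub_right, add_sub_right_comm, hh.intervalIntegral_add_eq (t - θ) t]

theorem intervalIntegral.integral_sub_const {g : ℝ → ℝ} {a b : ℝ}
    (hg : IntervalIntegrable g MeasureTheory.volume a b) (c : ℝ) :
    ∫ τ in a..b, (g τ - c) = (∫ τ in a..b, g τ) - (b - a) * c := by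
  rw [integral_sub hg intervalIntegrable_const, integral_const, smul_eq_mul]

theorem intervalIntegral.integral_inner_smul_of_inner_eq_one {E : Type*}
    [NormedAddCommGroup E] [InnerProductSpace ℝ E] {z v : ℝ → E}
    (hzv : ∀ t, inner ℝ (z t) (v t) = 1) (c : ℝ → ℝ) (a b : ℝ) :
    ∫ τ in a..b, inner ℝ (z τ) (c τ • v τ) = ∫ τ in a..b, c τ := by
  simp only [real_inner_smul_right, hzv, mul_one]

theorem stmt18_general (n : ℕ) (T : ℝ)
    (f : EuclideanSpace ℝ (Fin n) → EuclideanSpace ℝ (Fin n))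
    (x₀ zstar y₀ : ℝ → EuclideanSpace ℝ (Fin n))
    (hx : ∀ t : ℝ, HasDerivAt x₀ (f (x₀ t)) t)
    (hy : Continuous y₀)
    (hxper : ∀ t : ℝ, x₀ (t + T) = x₀ t)
    (hyper : ∀ t : ℝ, y₀ (t + T) = y₀ t)
    (hnorm : ∀ t : ℝ, (inner ℝ (zstar t) (f (x₀ t)) : ℝ) = 1)
    (m δ : ℝ) (θ : ℝ) :
    (∫ τ in (0:ℝ)..T,
        (inner ℝ (zstar τ) ((‖x₀ τ - y₀ (τ - θ)‖ ^ 2 - m - δ) • f (x₀ τ)) : ℝ)) =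
      (∫ τ in (0:ℝ)..T, ‖x₀ τ - y₀ (τ - θ)‖ ^ 2) - T * m - T * δ ∧
    (∫ τ in (0:ℝ)..T, ‖x₀ τ - y₀ (τ - θ)‖ ^ 2) =
      ∫ τ in (0:ℝ)..T, ‖x₀ (τ + θ) - y₀ τ‖ ^ 2 := by
  have hx₀ : Continuous x₀ := continuous_iff_continuousAt.2 fun t => (hx t).continuousAt
  have hdist : Continuous fun τ => ‖x₀ τ - y₀ (τ - θ)‖ ^ 2 := by fun_prop
  refine ⟨?_, ?_⟩
  · rw [integral_inner_smul_of_inner_eq_one hnorm, integral_sub_const,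
      integral_sub_const (hdist.intervalIntegrable 0 T), sub_zero]
    exact (hdist.intervalIntegrable 0 T).sub intervalIntegrable_const
  · have hper : Periodic (fun τ => ‖x₀ (τ + θ) - y₀ τ‖ ^ 2) T := fun t => by
      simp only [add_right_comm t T θ, hxper, hyper]
    simpa using hper.intervalIntegral_comp_sub_eq 0 θ

/-- computation of the Malkin bifurcation function for the
perturbation γ_δ(t,x) = (|x - y₀(t)|² - m - δ) f(x): using x₀' = f(x₀), the
normalization ⟨z*(τ), f(x₀(τ))⟩ = 1 and T-periodicity,
F_δ(θ) = ∫₀ᵀ ⟨z*(τ), γ_δ(τ-θ, x₀(τ))⟩ dτ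
       = ∫₀ᵀ |x₀(τ) - y₀(τ-θ)|² dτ - Tm - Tδ
       = ∫₀ᵀ |x₀(τ+θ) - y₀(τ)|² dτ - Tm - Tδ. -/
theorem stmt18 (n : ℕ) (T : ℝ) (hT : 0 < T)
    (f : EuclideanSpace ℝ (Fin n) → EuclideanSpace ℝ (Fin n))
    (hf : ContDiff ℝ 1 f)
    (x₀ zstar y₀ : ℝ → EuclideanSpace ℝ (Fin n))
    (hx : ∀ t : ℝ, HasDerivAt x₀ (f (x₀ t)) t)
    (hz : Continuous zstar) (hy : Continuous y₀)
    (hxper : ∀ t : ℝ, x₀ (t + T) = x₀ t)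
    (hzper : ∀ t : ℝ, zstar (t + T) = zstar t)
    (hyper : ∀ t : ℝ, y₀ (t + T) = y₀ t)
    (hnorm : ∀ t : ℝ, (inner ℝ (zstar t) (f (x₀ t)) : ℝ) = 1)
    (m δ : ℝ) (hδ : 0 ≤ δ) (θ : ℝ) :
    (∫ τ in (0:ℝ)..T,
        (inner ℝ (zstar τ) ((‖x₀ τ - y₀ (τ - θ)‖ ^ 2 - m - δ) • f (x₀ τ)) : ℝ)) =
      (∫ τ in (0:ℝ)..T, ‖x₀ τ - y₀ (τ - θ)‖ ^ 2) - T * m - T * δ ∧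
    (∫ τ in (0:ℝ)..T, ‖x₀ τ - y₀ (τ - θ)‖ ^ 2) =
      ∫ τ in (0:ℝ)..T, ‖x₀ (τ + θ) - y₀ τ‖ ^ 2 :=
  stmt18_general n T f x₀ zstar y₀ hx hy hxper hyper hnorm m δ θ
end
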